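/- arXiv:2301.12401 — 2 statements merged into one kernel-verified Lean document; each statement's English description precedes it below -/
import Mathlib

section
/- With orthonormal POD basis {φ_k}_{k=1}^{N} constructed from the Gram matrix eigenvectors as above, the POD projection error equals the sum of the discarded eigenvalues: Σ_{i=1}^{N_s} ‖T_i - Σ_{k=1}^{N} ⟨T_i, φ_k⟩ φ_k‖^2 = Σ_{k=N+1}^{N_s} λ_k, where λ_1 ≥ ⋯ ≥ λ_{N_s} ≥ 0 are the eigenvalues of the Gram matrix. -/
/-!
Put `v k = ∑ j, q k j • T j`. The eigenvector equations make the `v k` pairwise orthogonal with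
`‖v k‖ ^ 2 = λ k` (so `λ k ≥ 0`, and `v k = 0` when `λ k = 0`), and `⟪T i, v k⟫ = λ k * q k i`.
Hence `⟪T i, φ k⟫ • φ k = q k i • v k` for every `k`. Since the matrix `q` is orthogonal, its
columns are orthonormal too, which gives `T i = ∑ k, q k i • v k`. The residual of `T i` is
therefore `∑` over the discarded `k` of `q k i • v k`, whose squared norm is
`∑ λ k * q k i ^ 2` by Pythagoras; summing over `i` uses that the rows of `q` are unit vectors.
-/

open scoped RealInnerProductSpace

open Finset Matrix

section

variable {ι H : Type*} [Fintype ι] [NormedAddCommGroup H] [InnerProductSpace ℝ H]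

theorem inner_linearCombination_eq_gram_mulVec (T : ι → H) (c : ι → ℝ) (i : ι) :
    ⟪T i, Fintype.linearCombination ℝ T c⟫ = (gram ℝ T *ᵥ c) i := by
  simp only [Fintype.linearCombination_apply, inner_sum, real_inner_smul_right, mulVec,
    dotProduct, gram_apply, mul_comm]

theorem inner_linearCombination_eq_dotProduct_gram_mulVec (T : ι → H) (c d : ι → ℝ) :
    ⟪Fintype.linearCombination ℝ T c, Fintype.linearCombination ℝ T d⟫ = c ⬝ᵥ gram ℝ T *ᵥ d := by
  simpa only [Fintype.linearCombination_apply, star_trivial] using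
    (star_dotProduct_gram_mulVec T c d).symm

theorem transpose_mul_self_eq_one_of_orthonormal_rows [DecidableEq ι] {q : ι → ι → ℝ}
    (horth : ∀ k l, q k ⬝ᵥ q l = if k = l then 1 else 0) : (of q)ᵀ * of q = 1 := by
  refine mul_eq_one_comm.mp (Matrix.ext fun k l => ?_)
  simpa [mul_apply, one_apply, dotProduct] using horth k l

theorem sum_smul_linearCombination_of_transpose_mul_self [DecidableEq ι] (T : ι → H)
    {q : ι → ι → ℝ} (hq : (of q)ᵀ * of q = 1) (i : ι) :
    ∑ k, q k i • Fintype.linearCombination ℝ T (q k) = T i := by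
  have hcol (j : ι) : ∑ k, q k i * q k j = if i = j then 1 else 0 := by
    simpa [mul_apply, one_apply] using congrFun (congrFun hq i) j
  simp only [Fintype.linearCombination_apply, smul_sum, smul_smul]
  rw [sum_comm]
  simp only [← sum_smul, hcol, ite_smul, one_smul, zero_smul, sum_ite_eq, mem_univ, if_true]

noncomputable def podMode (T : ι → H) (lam : ι → ℝ) (q : ι → ι → ℝ) (k : ι) : H :=
  if 0 < lam k then (√(lam k))⁻¹ • Fintype.linearCombination ℝ T (q k) else 0

variable {T : ι → H} {lam : ι → ℝ} {q : ι → ι → ℝ}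

theorem inner_linearCombination_eigenvector (heig : ∀ k, gram ℝ T *ᵥ q k = lam k • q k)
    (i k : ι) : ⟪T i, Fintype.linearCombination ℝ T (q k)⟫ = lam k * q k i := by
  rw [inner_linearCombination_eq_gram_mulVec, heig, Pi.smul_apply, smul_eq_mul]

variable [DecidableEq ι]

theorem inner_linearCombination_eigenvectors (heig : ∀ k, gram ℝ T *ᵥ q k = lam k • q k)
    (horth : ∀ k l, q k ⬝ᵥ q l = if k = l then 1 else 0) (k l : ι) :
    ⟪Fintype.linearCombination ℝ T (q k), Fintype.linearCombination ℝ T (q l)⟫ =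
      if k = l then lam k else 0 := by
  rw [inner_linearCombination_eq_dotProduct_gram_mulVec, heig, dotProduct_smul, horth, smul_eq_mul,
    mul_ite, mul_one, mul_zero]
  split_ifs with hkl
  · rw [hkl]
  · rfl

theorem eigenvalue_eq_norm_sq_linearCombination (heig : ∀ k, gram ℝ T *ᵥ q k = lam k • q k)
    (horth : ∀ k l, q k ⬝ᵥ q l = if k = l then 1 else 0) (k : ι) :
    lam k = ‖Fintype.linearCombination ℝ T (q k)‖ ^ 2 := by
  rw [← real_inner_self_eq_norm_sq, inner_linearCombination_eigenvectors heig horth, if_pos rfl]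

theorem inner_podMode_smul_podMode (heig : ∀ k, gram ℝ T *ᵥ q k = lam k • q k)
    (horth : ∀ k l, q k ⬝ᵥ q l = if k = l then 1 else 0) (i k : ι) :
    ⟪T i, podMode T lam q k⟫ • podMode T lam q k = q k i • Fintype.linearCombination ℝ T (q k) := by
  unfold podMode
  split_ifs with hpos
  · rw [real_inner_smul_right, inner_linearCombination_eigenvector heig, smul_smul]
    congr 1
    have hsqrt : √(lam k) ≠ 0 := (Real.sqrt_pos.mpr hpos).ne'
    field_simp
    rw [Real.sq_sqrt hpos.le]
  · have hzero : Fintype.linearCombination ℝ T (q k) = 0 := by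
      have hsq := eigenvalue_eq_norm_sq_linearCombination heig horth k ▸ not_lt.mp hpos
      exact norm_eq_zero.mp (pow_eq_zero_iff two_ne_zero |>.mp (hsq.antisymm (sq_nonneg _)))
    rw [hzero, smul_zero, smul_zero]

theorem sum_norm_sq_sum_smul_linearCombination_eigenvectors
    (heig : ∀ k, gram ℝ T *ᵥ q k = lam k • q k)
    (horth : ∀ k l, q k ⬝ᵥ q l = if k = l then 1 else 0) (s : Finset ι) :
    ∑ i, ‖∑ k ∈ s, q k i • Fintype.linearCombination ℝ T (q k)‖ ^ 2 = ∑ k ∈ s, lam k := by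
  have hterm (i : ι) : ‖∑ k ∈ s, q k i • Fintype.linearCombination ℝ T (q k)‖ ^ 2 =
      ∑ k ∈ s, lam k * q k i ^ 2 := by
    rw [← real_inner_self_eq_norm_sq, sum_inner]
    simp_rw [inner_sum, real_inner_smul_left, real_inner_smul_right,
      inner_linearCombination_eigenvectors heig horth, mul_ite, mul_zero, sum_ite_eq]
    exact sum_congr rfl fun k hk => by rw [if_pos hk]; ring
  have hunit (k : ι) : ∑ i, q k i ^ 2 = 1 := by
    simpa [sq, dotProduct] using horth k k
  simp_rw [hterm]
  rw [sum_comm]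
  simp_rw [← mul_sum, hunit, mul_one]

theorem sub_sum_inner_podMode_smul_podMode (heig : ∀ k, gram ℝ T *ᵥ q k = lam k • q k)
    (horth : ∀ k l, q k ⬝ᵥ q l = if k = l then 1 else 0) (s : Finset ι) (i : ι) :
    T i - ∑ k ∈ s, ⟪T i, podMode T lam q k⟫ • podMode T lam q k =
      ∑ k ∈ sᶜ, q k i • Fintype.linearCombination ℝ T (q k) := by
  simp_rw [inner_podMode_smul_podMode heig horth]
  rw [← sum_smul_linearCombination_of_transpose_mul_self T
      (transpose_mul_self_eq_one_of_orthonormal_rows horth) i,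
    ← sum_compl_add_sum s, add_sub_cancel_right]

theorem sum_norm_sq_sub_sum_inner_podMode_smul_podMode
    (heig : ∀ k, gram ℝ T *ᵥ q k = lam k • q k)
    (horth : ∀ k l, q k ⬝ᵥ q l = if k = l then 1 else 0) (s : Finset ι) :
    ∑ i, ‖T i - ∑ k ∈ s, ⟪T i, podMode T lam q k⟫ • podMode T lam q k‖ ^ 2 = ∑ k ∈ sᶜ, lam k := by
  simp_rw [sub_sum_inner_podMode_smul_podMode heig horth,
    sum_norm_sq_sum_smul_linearCombination_eigenvectors heig horth]

end

theorem pod_projection_error_eq_discarded_eigenvalues_general {H : Type*}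
    [NormedAddCommGroup H] [InnerProductSpace ℝ H]
    (Ns : ℕ) (T : Fin Ns → H)
    (C : Matrix (Fin Ns) (Fin Ns) ℝ)
    (hC : ∀ i j, C i j = ⟪T i, T j⟫)
    (lam : Fin Ns → ℝ) (q : Fin Ns → (Fin Ns → ℝ))
    (heig : ∀ k, C.mulVec (q k) = lam k • q k)
    (horth : ∀ k l, (∑ j, q k j * q l j) = if k = l then 1 else 0)
    (φ : Fin Ns → H)
    (hφ : ∀ k, φ k = if 0 < lam k
        then (Real.sqrt (lam k))⁻¹ • ∑ j, q k j • T j else 0)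
    (N : ℕ) :
    ∑ i, ‖T i - ∑ k ∈ Finset.univ.filter (fun k : Fin Ns => (k : ℕ) < N),
          ⟪T i, φ k⟫ • φ k‖ ^ 2
      = ∑ k ∈ Finset.univ.filter (fun k : Fin Ns => N ≤ (k : ℕ)), lam k := by
  obtain rfl : C = gram ℝ T := Matrix.ext hC
  obtain rfl : φ = podMode T lam q := funext fun k => by
    rw [hφ k, podMode, Fintype.linearCombination_apply]
  rw [sum_norm_sq_sub_sum_inner_podMode_smul_podMode heig horth, compl_filter]
  simp only [not_lt]

/-- POD projection error identity: with the orthonormal POD basis `{φ_k}`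
constructed from the eigenvectors of the snapshot Gram matrix
(`φ_k = λ_k^{-1/2} Σ_j (q_k)_j T_j` when `λ_k > 0`, the terms with `λ_k = 0`
vanishing), the total projection error onto the first `N` modes equals the sum
of the discarded eigenvalues. -/
theorem pod_projection_error_eq_discarded_eigenvalues {H : Type*}
    [NormedAddCommGroup H] [InnerProductSpace ℝ H]
    (Ns : ℕ) (T : Fin Ns → H)
    (C : Matrix (Fin Ns) (Fin Ns) ℝ)
    (hC : ∀ i j, C i j = ⟪T i, T j⟫)
    (lam : Fin Ns → ℝ) (q : Fin Ns → (Fin Ns → ℝ))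
    (hlam : ∀ k, 0 ≤ lam k)
    (hord : ∀ k l : Fin Ns, k ≤ l → lam l ≤ lam k)
    (heig : ∀ k, C.mulVec (q k) = lam k • q k)
    (horth : ∀ k l, (∑ j, q k j * q l j) = if k = l then 1 else 0)
    (φ : Fin Ns → H)
    (hφ : ∀ k, φ k = if 0 < lam k
        then (Real.sqrt (lam k))⁻¹ • ∑ j, q k j • T j else 0)
    (N : ℕ) (hN : N ≤ Ns) :
    ∑ i, ‖T i - ∑ k ∈ Finset.univ.filter (fun k : Fin Ns => (k : ℕ) < N),
          ⟪T i, φ k⟫ • φ k‖ ^ 2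
      = ∑ k ∈ Finset.univ.filter (fun k : Fin Ns => N ≤ (k : ℕ)), lam k :=
  pod_projection_error_eq_discarded_eigenvalues_general Ns T C hC lam q heig horth φ hφ N
end

section
/- (Supremizer enrichment guarantees inf-sup.) Let V, Q be finite-dimensional inner product spaces, b : V × Q → ℝ bilinear, and for each basis element χ_i of a reduced pressure space Q_r ⊂ Q let the supremizer s_i ∈ V be defined by ⟨s_i, v⟩_V = b(v, χ_i) for all v ∈ V. If the reduced velocity space V_r contains all supremizers s_1,…,s_m and the s_i are linearly independent, then the reduced inf-sup constant is positive: inf_{q ∈ Q_r, q≠0} sup_{v ∈ V_r, v≠0} b(v,q)/(‖v‖_V ‖q‖_Q) > 0. -/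
open scoped RealInnerProductSpace

/-!
The supremizers depend linearly on the pressure: if `q = ∑ cᵢ χᵢ` then `v = ∑ cᵢ sᵢ` satisfies
`⟪v, w⟫ = b w q` for all `w`, so `b v q = ‖v‖²`. Since the `sᵢ` are linearly independent,
`c ↦ ∑ cᵢ sᵢ` is injective on the finite-dimensional coefficient space, hence bounded below there,
which gives `‖q‖ ≤ C ‖v‖` uniformly in `c`. Then `b v q ≥ C⁻¹ ‖v‖ ‖q‖`.
-/

theorem LinearMap.exists_norm_le_mul_norm_of_injective {𝕜 E F G : Type*}
    [NontriviallyNormedField 𝕜] [CompleteSpace 𝕜]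
    [NormedAddCommGroup E] [NormedSpace 𝕜 E] [FiniteDimensional 𝕜 E]
    [NormedAddCommGroup F] [NormedSpace 𝕜 F] [NormedAddCommGroup G] [NormedSpace 𝕜 G]
    {f : E →ₗ[𝕜] F} (hf : Function.Injective f) (g : E →ₗ[𝕜] G) :
    ∃ C > 0, ∀ x, ‖g x‖ ≤ C * ‖f x‖ := by
  obtain ⟨K, hK, hfK⟩ := f.exists_antilipschitzWith (LinearMap.ker_eq_bot.mpr hf)
  obtain ⟨M, hM, hgM⟩ := (LinearMap.toContinuousLinearMap g).bound
  refine ⟨M * K, by positivity, fun x => ?_⟩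
  calc ‖g x‖ ≤ M * ‖x‖ := hgM x
    _ ≤ M * (K * ‖f x‖) := by gcongr; exact hfK.le_mul_norm (map_zero f) x
    _ = M * K * ‖f x‖ := by ring

theorem inner_sum_smul_eq_apply_sum_smul {ι V Q : Type*} [Fintype ι]
    [NormedAddCommGroup V] [InnerProductSpace ℝ V] [AddCommGroup Q] [Module ℝ Q]
    (b : V →ₗ[ℝ] Q →ₗ[ℝ] ℝ) {χ : ι → Q} {s : ι → V} (hs : ∀ i, ∀ v : V, ⟪s i, v⟫ = b v (χ i))
    (c : ι → ℝ) (v : V) :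
    ⟪∑ i, c i • s i, v⟫ = b v (∑ i, c i • χ i) := by
  simp only [sum_inner, real_inner_smul_left, hs, map_sum, map_smul, smul_eq_mul]

theorem supremizer_enrichment_infsup_general
    {V Q : Type*}
    [NormedAddCommGroup V] [InnerProductSpace ℝ V]
    [NormedAddCommGroup Q] [InnerProductSpace ℝ Q]
    (b : V →ₗ[ℝ] Q →ₗ[ℝ] ℝ)
    (m : ℕ) (χ : Fin m → Q)
    (Qr : Submodule ℝ Q) (hQr : Qr = Submodule.span ℝ (Set.range χ))
    (s : Fin m → V)
    (hs : ∀ i, ∀ v : V, ⟪s i, v⟫ = b v (χ i))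
    (hsind : LinearIndependent ℝ s)
    (Vr : Submodule ℝ V) (hVr : ∀ i, s i ∈ Vr) :
    ∃ β : ℝ, 0 < β ∧ ∀ q ∈ Qr, q ≠ 0 →
      ∃ v ∈ Vr, v ≠ 0 ∧ β * ‖v‖ * ‖q‖ ≤ b v q := by
  obtain ⟨C, hC, hdom⟩ := LinearMap.exists_norm_le_mul_norm_of_injective
    hsind.fintypeLinearCombination_injective (Fintype.linearCombination ℝ χ)
  refine ⟨C⁻¹, inv_pos.mpr hC, fun q hq hq0 => ?_⟩
  obtain ⟨c, rfl⟩ := (Submodule.mem_span_range_iff_exists_fun ℝ).mp (hQr ▸ hq)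
  set v := ∑ i, c i • s i
  have hqv : ‖∑ i, c i • χ i‖ ≤ C * ‖v‖ := by
    simpa only [Fintype.linearCombination_apply] using hdom c
  have hv0 : v ≠ 0 := fun h => hq0 (norm_le_zero_iff.mp (by simpa [h] using hqv))
  refine ⟨v, Vr.sum_mem fun i _ => Vr.smul_mem _ (hVr i), hv0, ?_⟩
  rw [← inner_sum_smul_eq_apply_sum_smul b hs, real_inner_self_eq_norm_sq]
  calc C⁻¹ * ‖v‖ * ‖∑ i, c i • χ i‖ ≤ C⁻¹ * ‖v‖ * (C * ‖v‖) := by gcongr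
    _ = ‖v‖ ^ 2 := by field_simp

/-- Supremizer enrichment guarantees a positive reduced inf-sup constant: if
the reduced velocity space `V_r` contains the (linearly independent)
supremizers `s_i`, i.e. the Riesz representatives of `v ↦ b(v, χ_i)` for a
basis `χ_i` of the reduced pressure space `Q_r`, then
`inf_{q ∈ Q_r, q ≠ 0} sup_{v ∈ V_r, v ≠ 0} b(v,q)/(‖v‖‖q‖) > 0`. -/
theorem supremizer_enrichment_infsup
    {V Q : Type*}
    [NormedAddCommGroup V] [InnerProductSpace ℝ V] [FiniteDimensional ℝ V]
    [NormedAddCommGroup Q] [InnerProductSpace ℝ Q] [FiniteDimensional ℝ Q]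
    (b : V →ₗ[ℝ] Q →ₗ[ℝ] ℝ)
    (m : ℕ) (χ : Fin m → Q) (hχ : LinearIndependent ℝ χ)
    (Qr : Submodule ℝ Q) (hQr : Qr = Submodule.span ℝ (Set.range χ))
    (s : Fin m → V)
    (hs : ∀ i, ∀ v : V, ⟪s i, v⟫ = b v (χ i))
    (hsind : LinearIndependent ℝ s)
    (Vr : Submodule ℝ V) (hVr : ∀ i, s i ∈ Vr) :
    ∃ β : ℝ, 0 < β ∧ ∀ q ∈ Qr, q ≠ 0 →
      ∃ v ∈ Vr, v ≠ 0 ∧ β * ‖v‖ * ‖q‖ ≤ b v q :=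
  supremizer_enrichment_infsup_general b m χ Qr hQr s hs hsind Vr hVr
end
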